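/- arXiv:1710.10510 — 2 statements merged into one kernel-verified Lean document; each statement's English description precedes it below -/
import Mathlib

section
/- Let X be a compact metrizable space and Y a Tychonoff space. If there exists a uniformly continuous surjection φ : C_p(X) → C_p(Y), then Y is compact and metrizable. -/
/-!
Since `φ` is uniformly continuous, `C_p(Y)` is the union of the totally bounded images of the
sets `{u | ∀ x, |u x| ≤ n}` of `C_p(X)`; a diagonal argument then shows that every continuous function
on `Y` is bounded, i.e. `Y` is pseudocompact. Composing `φ` with `C(X, ℝ) → C_p(X)` gives a
continuous surjection from a second countable space onto `C_p(Y)`, so `C_p(Y)`, and with it `Y`,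
has a countable network; hence `Y` is Lindelöf, and a Lindelöf pseudocompact Tychonoff space is
compact. Finally `C_p(Y)` is separable, so countably many continuous functions separate the
points of `Y`, which embeds `Y` into `ℝ^ℕ`.
-/

/-- `C_p(X)`: continuous real-valued functions on `X` with the uniformity of
pointwise convergence. -/
def Cp (X : Type*) [TopologicalSpace X] : Type _ := {f : X → ℝ // Continuous f}

instance (X : Type*) [TopologicalSpace X] : UniformSpace (Cp X) :=
  inferInstanceAs (UniformSpace {f : X → ℝ // Continuous f})

open Set Filter Topology TopologicalSpace Function

def Pseudocompact (Z : Type*) [TopologicalSpace Z] : Prop :=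
  ∀ f : Z → ℝ, Continuous f → ∃ M, ∀ z, |f z| ≤ M

def HasCountableNetwork (Z : Type*) [TopologicalSpace Z] : Prop :=
  ∃ 𝒩 : Set (Set Z), 𝒩.Countable ∧
    ∀ z (U : Set Z), IsOpen U → z ∈ U → ∃ N ∈ 𝒩, z ∈ N ∧ N ⊆ U

namespace HasCountableNetwork

variable {Z W : Type*} [TopologicalSpace Z] [TopologicalSpace W]

theorem of_secondCountableTopology [SecondCountableTopology Z] : HasCountableNetwork Z :=
  ⟨countableBasis Z, countable_countableBasis Z, fun _ _ hU hz =>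
    (isBasis_countableBasis Z).exists_subset_of_mem_open hz hU⟩

theorem image (h : HasCountableNetwork Z) {f : Z → W} (hf : Continuous f)
    (hsurj : Surjective f) : HasCountableNetwork W := by
  obtain ⟨𝒩, h𝒩c, h𝒩⟩ := h
  refine ⟨Set.image f '' 𝒩, h𝒩c.image _, fun w U hU hw => ?_⟩
  obtain ⟨z, rfl⟩ := hsurj w
  obtain ⟨N, hN, hzN, hNU⟩ := h𝒩 z _ (hU.preimage hf) hw
  exact ⟨f '' N, mem_image_of_mem _ hN, mem_image_of_mem _ hzN, image_subset_iff.mpr hNU⟩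

theorem lindelofSpace (h : HasCountableNetwork Z) : LindelofSpace Z := by
  obtain ⟨𝒩, h𝒩c, h𝒩⟩ := h
  refine ⟨isLindelof_iff_countable_subcover.mpr fun U hU hcov => ?_⟩
  set 𝒩' := {N ∈ 𝒩 | ∃ i, N ⊆ U i}
  have : Countable 𝒩' := (h𝒩c.mono (sep_subset _ _)).to_subtype
  choose i hi using fun N : 𝒩' => N.2.2
  refine ⟨range i, countable_range i, fun z _ => ?_⟩
  obtain ⟨j, hj⟩ := mem_iUnion.mp (hcov (mem_univ z))
  obtain ⟨N, hN, hzN, hNU⟩ := h𝒩 z _ (hU j) hj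
  exact mem_biUnion (mem_range_self ⟨N, hN, j, hNU⟩) (hi _ hzN)

end HasCountableNetwork

theorem exists_continuous_ge_of_natCast_le (c : ℕ → ℝ) :
    ∃ h : C(ℝ, ℝ), ∀ (n : ℕ) (s : ℝ), n ≤ s → c n ≤ h s := by
  obtain ⟨h, hh⟩ := exists_continuous_forall_mem_convex_of_local_const
    (t := fun s => ⋂ (n : ℕ) (_ : (n : ℝ) ≤ s), Ici (c n))
    (fun _ => convex_iInter₂ fun _ _ => convex_Ici _)
    fun s => ⟨∑ n ∈ Finset.range (⌊s⌋₊ + 1), |c n|, by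
      filter_upwards [Iio_mem_nhds (Nat.lt_floor_add_one s)] with s' hs'
      refine mem_iInter₂.mpr fun n hn => ?_
      have hn' : n ∈ Finset.range (⌊s⌋₊ + 1) := by
        rw [Finset.mem_range]; exact_mod_cast hn.trans_lt hs'
      exact (le_abs_self _).trans (Finset.single_le_sum (fun k _ => abs_nonneg (c k)) hn')⟩
  exact ⟨h, fun n s hn => mem_iInter₂.mp (hh s) n hn⟩

namespace Pseudocompact

variable {Z : Type*} [TopologicalSpace Z] [CompletelyRegularSpace Z]

theorem not_locallyFinite (hZ : Pseudocompact Z) {U : ℕ → Set Z} (hU : ∀ n, IsOpen (U n))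
    (hne : ∀ n, (U n).Nonempty) : ¬LocallyFinite U := by
  intro hlf
  choose z hz using hne
  have hbump : ∀ n : ℕ, ∃ b : Z → ℝ, Continuous b ∧ support b ⊆ U n ∧ 0 ≤ b ∧ b (z n) = n := by
    intro n
    obtain ⟨f, hf, hfz, hfU⟩ :=
      CompletelyRegularSpace.completely_regular_isOpen (z n) (U n) (hU n) (hz n)
    refine ⟨fun y => n * (1 - f y), by fun_prop, fun y hy => ?_,
      fun y => mul_nonneg n.cast_nonneg (sub_nonneg.2 (f y).2.2), by simp [hfz]⟩
    by_contra hyU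
    exact hy (by simp [hfU hyU])
  choose b hbc hbU hb0 hbz using hbump
  have hlfb : LocallyFinite fun n => support (b n) := hlf.subset hbU
  obtain ⟨M, hM⟩ := hZ _ (continuous_finsum hbc hlfb)
  obtain ⟨n, hn⟩ := exists_nat_gt M
  have hle := single_le_finsum n (hlfb.point_finite (z n)) fun j => hb0 j (z n)
  rw [hbz] at hle
  linarith [le_abs_self (∑ᶠ j, b j (z n)), hM (z n)]

theorem exists_iUnion_closure_eq_univ (hZ : Pseudocompact Z) {W : ℕ → Set Z}
    (hW : ∀ n, IsOpen (W n)) (hcov : ⋃ n, W n = univ) :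
    ∃ N, ⋃ n ≤ N, closure (W n) = univ := by
  by_contra! h
  refine hZ.not_locallyFinite (U := fun N => (⋃ n ≤ N, closure (W n))ᶜ)
    (fun N => ((finite_Iic N).isClosed_biUnion fun _ _ => isClosed_closure).isOpen_compl)
    (fun N => nonempty_compl.mpr (h N)) fun z => ?_
  obtain ⟨m, hm⟩ := mem_iUnion.mp (hcov ▸ mem_univ z)
  refine ⟨W m, (hW m).mem_nhds hm, (finite_lt_nat m).subset fun N ⟨y, hy, hyW⟩ => ?_⟩
  by_contra hmN
  exact hy (mem_iUnion₂.mpr ⟨m, not_lt.mp hmN, subset_closure hyW⟩)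

theorem compactSpace [LindelofSpace Z] (hZ : Pseudocompact Z) : CompactSpace Z := by
  classical
  rcases isEmpty_or_nonempty Z with hZe | hZne
  · infer_instance
  refine ⟨isCompact_iff_finite_subcover.mpr fun U hU hcov => ?_⟩
  have hreg : ∀ z, ∃ i V, IsOpen V ∧ z ∈ V ∧ closure V ⊆ U i := fun z => by
    obtain ⟨i, hi⟩ := mem_iUnion.mp (hcov (mem_univ z))
    obtain ⟨C, hC, hCc, hCU⟩ := exists_mem_nhds_isClosed_subset ((hU i).mem_nhds hi)
    exact ⟨i, interior C, isOpen_interior, mem_interior_iff_mem_nhds.mpr hC,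
      (closure_minimal interior_subset hCc).trans hCU⟩
  choose i V hVo hzV hVU using hreg
  obtain ⟨p, hp⟩ := isLindelof_univ.indexed_countable_subcover V hVo
    fun z _ => mem_iUnion.mpr ⟨z, hzV z⟩
  obtain ⟨N, hN⟩ := hZ.exists_iUnion_closure_eq_univ (W := V ∘ p) (fun n => hVo _)
    (univ_subset_iff.mp hp)
  refine ⟨(Finset.range (N + 1)).image (i ∘ p), fun z _ => ?_⟩
  obtain ⟨n, hn, hz⟩ := mem_iUnion₂.mp (hN ▸ mem_univ z)
  exact mem_iUnion₂.mpr ⟨i (p n),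
    Finset.mem_image_of_mem _ (Finset.mem_range.mpr (Nat.lt_succ_of_le hn)), hVU _ hz⟩

end Pseudocompact

namespace Cp

variable {Z : Type*} [TopologicalSpace Z]

theorem uniformContinuous_eval (z : Z) : UniformContinuous fun f : Cp Z => f.1 z :=
  (Pi.uniformContinuous_proj _ z).comp uniformContinuous_subtype_val

theorem totallyBounded_setOf_abs_le (r : ℝ) :
    TotallyBounded {u : Cp Z | ∀ z, |u.1 z| ≤ r} := by
  refine (totallyBounded_image_iff
    (isUniformEmbedding_subtype_val (p := fun f : Z → ℝ => Continuous f)).isUniformInducing).mp ?_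
  refine (isCompact_univ_pi fun _ => isCompact_Icc (a := -r) (b := r)).totallyBounded.subset ?_
  rintro _ ⟨u, hu, rfl⟩
  exact mem_univ_pi.mpr fun z => abs_le.mp (hu z)

theorem pseudocompact_of_iUnion_totallyBounded {A : ℕ → Set (Cp Z)}
    (hA : ∀ n, TotallyBounded (A n)) (hcov : ⋃ n, A n = univ) : Pseudocompact Z := by
  intro g hg
  by_contra! hunb
  choose y hy using fun n : ℕ => hunb n
  have hbdd : ∀ n, ∃ M, ∀ f ∈ A n, |f.1 (y n)| ≤ M := fun n => by
    obtain ⟨M, hM⟩ := isBounded_iff_forall_norm_le.mp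
      ((hA n).image (uniformContinuous_eval (y n))).isBounded
    exact ⟨M, fun f hf => hM _ (mem_image_of_mem _ hf)⟩
  choose M hM using hbdd
  -- `h ∘ |g|` beats the bound of `A n` at `y n` for every `n`, so it lies in no `A n`.
  obtain ⟨h, hh⟩ := exists_continuous_ge_of_natCast_le (M · + 1)
  let F : Cp Z := ⟨fun z => h |g z|, h.continuous.comp hg.abs⟩
  obtain ⟨n, hn⟩ := mem_iUnion.mp (hcov ▸ mem_univ F)
  have hFle : |h (|g (y n)|)| ≤ M n := hM n F hn
  have hFge : M n + 1 ≤ h (|g (y n)|) := hh n _ (hy n).le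
  linarith [le_abs_self (h (|g (y n)|))]

theorem pseudocompact_of_uniformContinuous_surjective {X : Type*} [TopologicalSpace X]
    [CompactSpace X] {φ : Cp X → Cp Z} (hφ : UniformContinuous φ) (hsurj : Surjective φ) :
    Pseudocompact Z := by
  refine pseudocompact_of_iUnion_totallyBounded (A := fun n : ℕ => φ '' {u | ∀ x, |u.1 x| ≤ n})
    (fun n => (totallyBounded_setOf_abs_le _).image hφ) (eq_univ_of_forall fun f => ?_)
  obtain ⟨u, rfl⟩ := hsurj f
  obtain ⟨C, hC⟩ := isCompact_univ.exists_bound_of_continuousOn u.2.continuousOn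
  exact mem_iUnion.mpr ⟨⌈C⌉₊, mem_image_of_mem _ fun x => (hC x (mem_univ x)).trans (Nat.le_ceil C)⟩

theorem _root_.HasCountableNetwork.of_cp [CompletelyRegularSpace Z]
    (h : HasCountableNetwork (Cp Z)) : HasCountableNetwork Z := by
  obtain ⟨𝒩, h𝒩c, h𝒩⟩ := h
  refine ⟨(fun N => {z | ∀ f ∈ N, 1 / 2 < f.1 z}) '' 𝒩, h𝒩c.image _, fun z U hU hz => ?_⟩
  obtain ⟨f, hf, hfz, hfU⟩ := CompletelyRegularSpace.completely_regular_isOpen z U hU hz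
  let g : Cp Z := ⟨fun y => 1 - f y, by fun_prop⟩
  obtain ⟨N, hN, hgN, hNW⟩ := h𝒩 g {h | 1 / 2 < h.1 z}
    (isOpen_Ioi.preimage (uniformContinuous_eval z).continuous)
    (show (1 : ℝ) / 2 < 1 - f z by norm_num [hfz])
  refine ⟨_, mem_image_of_mem _ hN, fun h hh => hNW hh, fun y hy => ?_⟩
  by_contra hyU
  have := hy g hgN
  norm_num [g, hfU hyU] at this

theorem metrizableSpace_of_separableSpace [CompactSpace Z] [CompletelyRegularSpace Z] [T1Space Z]
    [SeparableSpace (Cp Z)] : MetrizableSpace Z := by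
  have : Nonempty (Cp Z) := ⟨⟨0, continuous_const⟩⟩
  let e : Z → ℕ → ℝ := fun z n => (denseSeq (Cp Z) n).1 z
  have he : Continuous e := continuous_pi fun n => (denseSeq (Cp Z) n).2
  suffices hinj : Injective e from (he.isClosedEmbedding hinj).isEmbedding.metrizableSpace
  intro y y' hyy'
  by_contra hne
  obtain ⟨f, hf, hfy, hfy'⟩ := CompletelyRegularSpace.completely_regular y {y'} isClosed_singleton hne
  have hW : IsOpen {h : Cp Z | h.1 y < 1 / 3 ∧ 2 / 3 < h.1 y'} :=
    (isOpen_Iio.preimage (uniformContinuous_eval y).continuous).inter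
      (isOpen_Ioi.preimage (uniformContinuous_eval y').continuous)
  obtain ⟨n, hn⟩ := (denseRange_denseSeq (Cp Z)).exists_mem_open hW
    ⟨⟨fun z => f z, by fun_prop⟩,
      show (f y : ℝ) < 1 / 3 ∧ 2 / 3 < (f y' : ℝ) by norm_num [hfy, hfy' (mem_singleton y')]⟩
  linarith [hn.1, hn.2, congrFun hyy' n]

end Cp

theorem compact_metrizable_of_u_dominated
    {X Y : Type*} [TopologicalSpace X] [CompactSpace X]
    [TopologicalSpace.MetrizableSpace X]
    [TopologicalSpace Y] [CompletelyRegularSpace Y] [T1Space Y]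
    (φ : Cp X → Cp Y) (hφ : UniformContinuous φ) (hsurj : Function.Surjective φ) :
    CompactSpace Y ∧ TopologicalSpace.MetrizableSpace Y := by
  let ι : C(X, ℝ) → Cp X := fun v => ⟨v, v.continuous⟩
  have hψ : Continuous (φ ∘ ι) :=
    hφ.continuous.comp ((continuous_pi fun x => continuous_eval_const x).subtype_mk _)
  have hψsurj : Surjective (φ ∘ ι) := fun f =>
    let ⟨u, hu⟩ := hsurj f
    ⟨⟨u.1, u.2⟩, hu⟩
  have : LindelofSpace Y :=
    ((HasCountableNetwork.of_secondCountableTopology.image hψ hψsurj).of_cp).lindelofSpace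
  have : CompactSpace Y := (Cp.pseudocompact_of_uniformContinuous_surjective hφ hsurj).compactSpace
  have : SeparableSpace (Cp Y) := hψsurj.denseRange.separableSpace hψ
  exact ⟨inferInstance, Cp.metrizableSpace_of_separableSpace⟩
end

section
/- Let X be a Polish space. Then X is σ-compact if and only if the c-height of X is countable, i.e., there is an ordinal α < ω₁ with X_c^{[α]} = ∅, where X_c^{[·]} is the c-derivative. -/
/-!
A point leaves the c-derivatives at a successor stage `β + 1`, by lying in `J(X^{[β]})`, and
`J(Y)` is covered by countably many compact sets because `Y` is Lindelöf. Hence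
`X^{[α]} = ∅` for a countable `α` writes `X` as a countable union of compact sets.

Conversely, if `X` is σ-compact then so is every nonempty closed `Y ⊆ X`, which is moreover
Polish; by the Baire category theorem one of countably many compact pieces of `Y` has
nonempty interior in `Y`, so `J(Y) ≠ ∅`. Thus the derivative drops at every stage until it is
empty. In a second countable space a decreasing family of closed sets drops at only countably
many successor stages, since distinct stages are separated by distinct basic open sets.
-/

/-- `J(Y)`: the union of all subsets of `Y` which are open in `Y` and have
compact closure in `Y`. -/
def cKernel {X : Type*} [TopologicalSpace X] (Y : Set X) : Set X :=
  ⋃₀ {U : Set X | U ⊆ Y ∧ (∃ V : Set X, IsOpen V ∧ U = V ∩ Y) ∧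
      IsCompact (closure (Subtype.val ⁻¹' U : Set ↥Y))}

/-- The `α`-th c-derivative `X_c^{[α]}`. -/
noncomputable def cDeriv (X : Type*) [TopologicalSpace X] (α : Ordinal) : Set X :=
  Ordinal.limitRecOn α Set.univ (fun _ S => S \ cKernel S)
    (fun o _ ih => ⋂ β, ⋂ h : β < o, ih β h)

open Set Topology TopologicalSpace

def pointsWithRelCompactNhd (Z : Type*) [TopologicalSpace Z] : Set Z :=
  ⋃₀ {U : Set Z | IsOpen U ∧ IsCompact (closure U)}

section RelCompactNhd

variable {Z : Type*} [TopologicalSpace Z]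

theorem isOpen_pointsWithRelCompactNhd : IsOpen (pointsWithRelCompactNhd Z) :=
  isOpen_sUnion fun _ hU => hU.1

theorem exists_isSigmaCompact_superset_pointsWithRelCompactNhd [SecondCountableTopology Z] :
    ∃ s, IsSigmaCompact s ∧ pointsWithRelCompactNhd Z ⊆ s := by
  obtain ⟨T, hTc, hTsub, hTeq⟩ := isOpen_sUnion_countable
    {U : Set Z | IsOpen U ∧ IsCompact (closure U)} fun _ hU => hU.1
  refine ⟨⋃ t ∈ T, closure t, isSigmaCompact_biUnion hTc fun t ht => (hTsub ht).2.isSigmaCompact,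
    ?_⟩
  rw [pointsWithRelCompactNhd, ← hTeq, sUnion_eq_biUnion]
  exact iUnion₂_mono fun _ _ => subset_closure

theorem pointsWithRelCompactNhd_nonempty [BaireSpace Z] [SigmaCompactSpace Z] [R1Space Z]
    [Nonempty Z] : (pointsWithRelCompactNhd Z).Nonempty := by
  have hcover : ⋃ n, closure (compactCovering Z n) = univ :=
    univ_subset_iff.1 <| iUnion_compactCovering Z ▸ iUnion_mono fun _ => subset_closure
  obtain ⟨n, z, hz⟩ := nonempty_interior_of_iUnion_of_closed (fun _ => isClosed_closure) hcover
  refine ⟨z, _, ⟨isOpen_interior, ?_⟩, hz⟩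
  exact (isCompact_compactCovering Z n).closure.of_isClosed_subset isClosed_closure
    (closure_minimal interior_subset isClosed_closure)

end RelCompactNhd

section CKernel

variable {X : Type*} [TopologicalSpace X]

theorem cKernel_eq_image (Y : Set X) :
    cKernel Y = Subtype.val '' pointsWithRelCompactNhd Y := by
  ext x
  constructor
  · rintro ⟨U, ⟨hUY, ⟨V, hV, rfl⟩, hcpt⟩, hx⟩
    refine ⟨⟨x, hUY hx⟩, ⟨_, ⟨?_, hcpt⟩, hx⟩, rfl⟩
    rw [preimage_inter, Subtype.coe_preimage_self, inter_univ]
    exact hV.preimage continuous_subtype_val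
  · rintro ⟨y, ⟨W, ⟨hW, hcpt⟩, hy⟩, rfl⟩
    obtain ⟨V, hV, rfl⟩ := isOpen_induced_iff.1 hW
    refine ⟨V ∩ Y, ⟨inter_subset_right, ⟨V, hV, rfl⟩, ?_⟩, hy, y.2⟩
    rwa [preimage_inter, Subtype.coe_preimage_self, inter_univ]

theorem cKernel_subset (Y : Set X) : cKernel Y ⊆ Y := by
  rw [cKernel_eq_image]
  exact Subtype.coe_image_subset _ _

theorem IsClosed.diff_cKernel {Y : Set X} (hY : IsClosed Y) : IsClosed (Y \ cKernel Y) := by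
  rw [cKernel_eq_image, ← image_val_compl]
  exact hY.isClosedEmbedding_subtypeVal.isClosedMap _
    isOpen_pointsWithRelCompactNhd.isClosed_compl

theorem exists_isSigmaCompact_superset_cKernel [SecondCountableTopology X] (Y : Set X) :
    ∃ s, IsSigmaCompact s ∧ cKernel Y ⊆ s := by
  obtain ⟨s, hs, hsub⟩ := exists_isSigmaCompact_superset_pointsWithRelCompactNhd (Z := Y)
  exact ⟨_, hs.image continuous_subtype_val, cKernel_eq_image Y ▸ image_mono hsub⟩

theorem IsClosed.cKernel_nonempty [IsCompletelyMetrizableSpace X] [SigmaCompactSpace X]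
    {Y : Set X} (hY : IsClosed Y) (hne : Y.Nonempty) : (cKernel Y).Nonempty := by
  have := hY.isClosedEmbedding_subtypeVal.IsCompletelyMetrizableSpace
  have := hY.sigmaCompactSpace
  have := hne.to_subtype
  rw [cKernel_eq_image]
  exact pointsWithRelCompactNhd_nonempty.image _

end CKernel

section CDeriv

variable {X : Type*} [TopologicalSpace X]

theorem cDeriv_zero : cDeriv X 0 = univ :=
  Ordinal.limitRecOn_zero _ _ _

theorem cDeriv_add_one (α : Ordinal) :
    cDeriv X (α + 1) = cDeriv X α \ cKernel (cDeriv X α) :=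
  Ordinal.limitRecOn_add_one _ _ _ _

theorem cDeriv_limit {α : Ordinal} (hα : Order.IsSuccLimit α) :
    cDeriv X α = ⋂ β ∈ Iio α, cDeriv X β :=
  Ordinal.limitRecOn_limit _ _ _ _ hα

theorem isClosed_cDeriv (α : Ordinal) : IsClosed (cDeriv X α) := by
  induction α using Ordinal.limitRecOn with
  | zero => exact cDeriv_zero (X := X) ▸ isClosed_univ
  | add_one α ih => exact cDeriv_add_one (X := X) α ▸ ih.diff_cKernel
  | limit α hα ih =>
    rw [cDeriv_limit hα]
    exact isClosed_biInter ih

theorem cDeriv_antitone : Antitone (cDeriv X) := by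
  intro α β hαβ
  induction β using Ordinal.limitRecOn with
  | zero => rw [nonpos_iff_eq_zero.1 hαβ]
  | add_one β ih =>
    rcases hαβ.eq_or_lt with rfl | hαβ
    · rfl
    · rw [cDeriv_add_one]
      exact sdiff_subset.trans (ih (Order.lt_add_one_iff.1 hαβ))
  | limit β hβ ih =>
    rcases hαβ.eq_or_lt with rfl | hαβ
    · rfl
    · rw [cDeriv_limit hβ]
      exact biInter_subset_of_mem hαβ

theorem compl_cDeriv (α : Ordinal) :
    (cDeriv X α)ᶜ = ⋃ β ∈ Iio α, cKernel (cDeriv X β) := by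
  induction α using Ordinal.limitRecOn with
  | zero => simp [cDeriv_zero]
  | add_one α ih =>
    rw [cDeriv_add_one, compl_sdiff, Iio_add_one_eq_Iic, ← Iio_insert, biUnion_insert, ih]
  | limit α hα ih =>
    rw [cDeriv_limit hα, compl_iInter₂]
    refine subset_antisymm (iUnion₂_subset fun β hβ => ?_) (iUnion₂_subset fun β hβ => ?_)
    · exact ih β hβ ▸ biUnion_subset_biUnion_left (Iio_subset_Iio hβ.le)
    · have hβ' : β + 1 < α := hα.add_one_lt hβ
      refine subset_biUnion_of_mem (u := fun γ => (cDeriv X γ)ᶜ) hβ' |>.trans' ?_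
      exact ih _ hβ' ▸ subset_biUnion_of_mem (u := fun γ => cKernel (cDeriv X γ))
        (mem_Iio.2 (lt_add_one β))

end CDeriv

theorem countable_setOf_nonempty_diff_succ {X ι : Type*} [TopologicalSpace X]
    [SecondCountableTopology X] [LinearOrder ι] [SuccOrder ι] {f : ι → Set X}
    (hf : Antitone f) (hclosed : ∀ i, IsClosed (f i)) :
    {i | (f i \ f (Order.succ i)).Nonempty}.Countable := by
  set S := {i | (f i \ f (Order.succ i)).Nonempty}
  have hbasis (i : ι) (hi : i ∈ S) :
      ∃ b ∈ countableBasis X, (b ∩ f i).Nonempty ∧ Disjoint b (f (Order.succ i)) := by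
    obtain ⟨x, hxi, hxsucc⟩ := hi
    obtain ⟨b, hb, hxb, hbsub⟩ := (isBasis_countableBasis X).exists_subset_of_mem_open
      (mem_compl hxsucc) (hclosed _).isOpen_compl
    exact ⟨b, hb, ⟨x, hxb, hxi⟩, disjoint_compl_left.mono_left hbsub⟩
  choose! b hb hmeets hdisj using hbasis
  have hb_ne {i j : ι} (hi : i ∈ S) (hj : j ∈ S) (hij : i < j) : b i ≠ b j := by
    intro hbij
    obtain ⟨x, hxb, hxj⟩ := hmeets j hj
    exact (hdisj i hi).notMem_of_mem_left (hbij ▸ hxb) (hf (Order.succ_le_of_lt hij) hxj)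
  refine MapsTo.countable_of_injOn (fun i hi => hb i hi) (fun i hi j hj hbij => ?_)
    (countable_countableBasis X)
  by_contra hij
  rcases lt_or_gt_of_ne hij with hij | hji
  · exact hb_ne hi hj hij hbij
  · exact hb_ne hj hi hji hbij.symm

theorem Ordinal.countable_Iio_iff_lt_ord_aleph_one {o : Ordinal} :
    (Iio o).Countable ↔ o < (Cardinal.aleph 1).ord := by
  rw [← Cardinal.le_aleph0_iff_set_countable, Cardinal.mk_Iio_ordinal, Cardinal.lift_le_aleph0,
    Cardinal.lt_ord, ← Cardinal.succ_aleph0, Order.lt_succ_iff]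

/-- A Polish space is σ-compact iff its c-height is countable. -/
theorem sigmaCompact_iff_c_height_countable
    (X : Type*) [TopologicalSpace X] [PolishSpace X] :
    SigmaCompactSpace X ↔
      ∃ α : Ordinal, α < (Cardinal.aleph 1).ord ∧ cDeriv X α = ∅ := by
  constructor
  · intro _
    by_contra! hnonempty
    have hjump : Iio (Cardinal.aleph 1).ord ⊆
        {α | (cDeriv X α \ cDeriv X (Order.succ α)).Nonempty} := fun α hα => by
      rw [mem_ofPred_eq, Order.succ_eq_add_one, cDeriv_add_one,
        sdiff_sdiff_cancel_left (cKernel_subset _)]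
      exact (isClosed_cDeriv α).cKernel_nonempty (hnonempty α hα)
    exact lt_irrefl _ <| Ordinal.countable_Iio_iff_lt_ord_aleph_one.1 <|
      (countable_setOf_nonempty_diff_succ cDeriv_antitone isClosed_cDeriv).mono hjump
  · rintro ⟨α, hα, hempty⟩
    choose s hs hsub using fun β => exists_isSigmaCompact_superset_cKernel (cDeriv X β)
    have hcover : ⋃ β ∈ Iio α, s β = univ := by
      refine univ_subset_iff.1 ?_
      rw [← compl_empty, ← hempty, compl_cDeriv]
      exact biUnion_mono subset_rfl fun β _ => hsub β
    rw [← isSigmaCompact_univ_iff, ← hcover]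
    exact isSigmaCompact_biUnion (Ordinal.countable_Iio_iff_lt_ord_aleph_one.2 hα) fun β _ => hs β
end
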